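/- arXiv:0902.4284 — 2 statements merged into one kernel-verified Lean document; each statement's English description precedes it below -/
import Mathlib

section
/- Fix a prime p and q ∈ ℂ_[p] with ‖q − 1‖ < p^{-1/(p-1)}. Then the q-bracket [·]_q maps the closed unit disk O_p bijectively onto itself, and it is a norm-preserving isometry: for all x, x' ∈ O_p one has ‖[x]_q − [x']_q‖ = ‖x − x'‖ and ‖[x]_q‖ = ‖x‖. -/
/-!
`K` plays the role of `ℂ_[p]`, the `p`-adic complex numbers: a complete, algebraically
closed, nonarchimedean normed field extending `ℚ_[p]` isometrically (so `‖(p : K)‖ = 1/p`).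
-/

noncomputable section

/-- The `p`-adic exponential, given by its power series. -/
def pexp {K : Type*} [NormedField K] [CompleteSpace K] (x : K) : K :=
  ∑' n : ℕ, x ^ n / (n.factorial : K)

/-- The `p`-adic logarithm, given by its power series around `1`. -/
def plog {K : Type*} [NormedField K] [CompleteSpace K] (q : K) : K :=
  ∑' n : ℕ, (-1) ^ (n + 1) * (q - 1) ^ n / (n : K)

/-- `q^x := exp (x · log q)`. -/
def qpow {K : Type*} [NormedField K] [CompleteSpace K] (q x : K) : K :=
  pexp (x * plog q)

open scoped Classical in
/-- The `q`-bracket `[x]_q = (q^x - 1)/(q - 1)`, with `[x]_1 = x`. -/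
def qbracket {K : Type*} [NormedField K] [CompleteSpace K] (q x : K) : K :=
  if q = 1 then x else (qpow q x - 1) / (q - 1)

/-!
Put `t = ‖q - 1‖ / p^(-1/(p-1)) < 1`. The key estimate is
`‖([x]_q - [x']_q) - (x - x')‖ ≤ t ‖x - x'‖` on the unit disk. By Legendre's formula and
`p^v_p(n) ≤ n`, the coefficients `1/n!` and `1/n` of `exp` and `log` have norm at most
`p^((n-1)/(p-1))`, and for any such power series the nonarchimedean estimate
`‖zⁿ - z'ⁿ‖ ≤ sⁿ⁻¹ ‖z - z'‖` shows that on the disk of radius `s < p^(-1/(p-1))` it differs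
from its linear term by an `s / p^(-1/(p-1))`-Lipschitz map. Hence
`log q = (q - 1)(1 + O(t))` and `q^x - q^x' = (x - x') log q (1 + O(t))`.
In an ultrametric space a map that is this close to the identity is an isometry, and it maps
each disk around `0` onto itself, by the contraction mapping theorem for `x ↦ w + (x - f x)`.
-/

open Filter IsUltrametricDist
open scoped Nat

section NearIdentity

variable {E : Type*} [NormedAddCommGroup E] [IsUltrametricDist E]

theorem norm_eq_of_norm_sub_le_mul {t : ℝ} (ht : t < 1) {a b : E} (h : ‖a - b‖ ≤ t * ‖b‖) :
    ‖a‖ = ‖b‖ := by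
  rcases eq_or_ne b 0 with rfl | hb
  · simpa using h
  have hlt : ‖a - b‖ < ‖b‖ :=
    h.trans_lt (mul_lt_of_lt_one_left (norm_pos_iff.2 hb) ht)
  calc ‖a‖ = ‖b + (a - b)‖ := by rw [add_sub_cancel]
    _ = ‖b‖ := by rw [norm_add_eq_max_of_norm_ne_norm hlt.ne', max_eq_left hlt.le]

theorem surjOn_of_norm_sub_sub_le [CompleteSpace E] {f : E → E} {t ρ : ℝ} (ht0 : 0 ≤ t)
    (ht : t < 1) (hf0 : f 0 = 0)
    (hf : ∀ x x', ‖x‖ ≤ ρ → ‖x'‖ ≤ ρ → ‖f x - f x' - (x - x')‖ ≤ t * ‖x - x'‖) :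
    Set.SurjOn f {x | ‖x‖ ≤ ρ} {x | ‖x‖ ≤ ρ} := by
  intro w (hw : ‖w‖ ≤ ρ)
  set g : E → E := fun x => w + (x - f x)
  have hg : Set.MapsTo g {x | ‖x‖ ≤ ρ} {x | ‖x‖ ≤ ρ} := by
    intro x (hx : ‖x‖ ≤ ρ)
    have hfx : ‖x - f x‖ ≤ t * ‖x‖ := by
      simpa [hf0, norm_sub_rev] using hf x 0 hx (by simpa using (norm_nonneg x).trans hx)
    exact (norm_add_le_max w _).trans
      (max_le hw (hfx.trans ((mul_le_of_le_one_left (norm_nonneg x) ht.le).trans hx)))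
  have hcontr : ContractingWith ⟨t, ht0⟩ (hg.restrict g _ _) := by
    refine ⟨ht, LipschitzWith.of_dist_le_mul fun x x' => ?_⟩
    rw [Subtype.dist_eq, Subtype.dist_eq, dist_eq_norm, dist_eq_norm]
    calc ‖g x - g x'‖ = ‖f x - f x' - (x - x' : E)‖ := by
          rw [← norm_neg]; congr 1; simp only [g]; abel
      _ ≤ t * ‖(x - x' : E)‖ := hf x x' x.2 x'.2
  obtain ⟨x, hx, hfix, -⟩ :=
    hcontr.exists_fixedPoint' (isClosed_le continuous_norm continuous_const).isComplete hg hw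
      (edist_ne_top _ _)
  refine ⟨x, hx, eq_of_sub_eq_zero ?_⟩
  calc f x - w = x - g x := by simp only [g]; abel
    _ = 0 := by rw [hfix.eq, sub_self]

end NearIdentity

theorem mul_pow_le_div_pow {c R s : ℝ} (hR : 0 < R) (hs : 0 ≤ s) {n : ℕ}
    (h : c * R ^ n ≤ 1) : c * s ^ n ≤ (s / R) ^ n := by
  calc c * s ^ n = c * R ^ n * (s / R) ^ n := by
        rw [div_pow, mul_assoc, mul_div_cancel₀ _ (pow_pos hR n).ne']
    _ ≤ (s / R) ^ n := mul_le_of_le_one_left (by positivity) h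

theorem tsum_mul_zero_pow {α : Type*} [Semiring α] [TopologicalSpace α] (a : ℕ → α) :
    ∑' n, a n * 0 ^ n = a 0 := by
  rw [tsum_eq_single 0 fun n hn => by simp [hn]]
  simp

section PowerSeries

variable {K : Type*} [NormedField K] [IsUltrametricDist K]

theorem norm_pow_succ_sub_pow_succ_le {z z' : K} {s : ℝ} (hz : ‖z‖ ≤ s) (hz' : ‖z'‖ ≤ s)
    (n : ℕ) : ‖z ^ (n + 1) - z' ^ (n + 1)‖ ≤ s ^ n * ‖z - z'‖ := by
  induction n with
  | zero => simp
  | succ n ih =>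
    have hs : 0 ≤ s := (norm_nonneg z).trans hz
    calc ‖z ^ (n + 2) - z' ^ (n + 2)‖
        = ‖z * (z ^ (n + 1) - z' ^ (n + 1)) + (z - z') * z' ^ (n + 1)‖ := by ring_nf
      _ ≤ max (s * (s ^ n * ‖z - z'‖)) (‖z - z'‖ * s ^ (n + 1)) := by
        refine (norm_add_le_max _ _).trans (max_le_max ?_ ?_) <;> rw [norm_mul]
        · exact mul_le_mul hz ih (norm_nonneg _) hs
        · rw [norm_pow]; gcongr
      _ = s ^ (n + 1) * ‖z - z'‖ := by rw [max_eq_left (le_of_eq (by ring))]; ring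

variable [CompleteSpace K] {a : ℕ → K} {R : ℝ}

theorem summable_mul_pow (ha : ∀ n, ‖a (n + 1)‖ * R ^ n ≤ 1) {z : K} (hz : ‖z‖ < R) :
    Summable fun n => a n * z ^ n := by
  have hR : 0 < R := (norm_nonneg z).trans_lt hz
  refine (summable_nat_add_iff 1).1 (NonarchimedeanAddGroup.summable_of_tendsto_cofinite_zero ?_)
  rw [Nat.cofinite_eq_atTop]
  have hgeom : Tendsto (fun n : ℕ => ‖z‖ * (‖z‖ / R) ^ n) atTop (nhds 0) := by
    simpa using (tendsto_pow_atTop_nhds_zero_of_lt_one (by positivity)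
      ((div_lt_one hR).2 hz)).const_mul ‖z‖
  refine squeeze_zero_norm (fun n => ?_) hgeom
  calc ‖a (n + 1) * z ^ (n + 1)‖ = ‖z‖ * (‖a (n + 1)‖ * ‖z‖ ^ n) := by
        rw [norm_mul, norm_pow, pow_succ]; ring
    _ ≤ ‖z‖ * (‖z‖ / R) ^ n :=
        mul_le_mul_of_nonneg_left (mul_pow_le_div_pow hR (norm_nonneg z) (ha n))
          (norm_nonneg z)

theorem norm_tsum_mul_pow_sub_tsum_mul_pow_sub_le (ha : ∀ n, ‖a (n + 1)‖ * R ^ n ≤ 1)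
    {s : ℝ} (hsR : s < R) {z z' : K} (hz : ‖z‖ ≤ s) (hz' : ‖z'‖ ≤ s) :
    ‖∑' n, a n * z ^ n - ∑' n, a n * z' ^ n - a 1 * (z - z')‖ ≤ s / R * ‖z - z'‖ := by
  have hs : 0 ≤ s := (norm_nonneg z).trans hz
  have hR : 0 < R := hs.trans_lt hsR
  have hsum := summable_mul_pow ha (hz.trans_lt hsR)
  have hsum' := summable_mul_pow ha (hz'.trans_lt hsR)
  set g : ℕ → K := fun n => a n * z ^ n - a n * z' ^ n
  have hsplit : ∑' n, a n * z ^ n - ∑' n, a n * z' ^ n - a 1 * (z - z') = ∑' n, g (n + 2) := by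
    rw [← hsum.tsum_sub hsum', ← (hsum.sub hsum').sum_add_tsum_nat_add 2]
    simp [g, Finset.sum_range_succ, mul_sub]
  rw [hsplit]
  refine norm_tsum_le_of_forall_le_of_nonneg (by positivity) fun n => ?_
  calc ‖g (n + 2)‖ ≤ ‖a (n + 2)‖ * (s ^ (n + 1) * ‖z - z'‖) := by
        rw [show g (n + 2) = _ from (mul_sub _ _ _).symm, norm_mul]
        gcongr
        exact norm_pow_succ_sub_pow_succ_le hz hz' (n + 1)
    _ ≤ (s / R) ^ (n + 1) * ‖z - z'‖ := by
        rw [← mul_assoc]; gcongr; exact mul_pow_le_div_pow hR hs (ha (n + 1))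
    _ ≤ s / R * ‖z - z'‖ := by
        gcongr
        exact pow_le_of_le_one (by positivity) ((div_le_one hR).2 hsR.le) n.succ_ne_zero

end PowerSeries

theorem padicValNat_mul_sub_one_le (p n : ℕ) : padicValNat p n * (p - 1) ≤ n - 1 := by
  rcases eq_or_ne n 0 with rfl | hn
  · simp
  rcases eq_or_ne p 0 with rfl | hp
  · simp
  have hbernoulli : 1 + padicValNat p n * (p - 1) ≤ p ^ padicValNat p n := by
    simpa [Nat.add_sub_cancel' (Nat.one_le_iff_ne_zero.2 hp)] using
      one_add_le_pow_of_two_add_nonneg (Nat.zero_le (2 + (p - 1))) (padicValNat p n)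
  have := Nat.le_of_dvd (Nat.pos_of_ne_zero hn) (pow_padicValNat_dvd (p := p) (n := n))
  omega

theorem padicValNat_factorial_mul_sub_one_le (p : ℕ) [Fact p.Prime] (n : ℕ) :
    padicValNat p n ! * (p - 1) ≤ n - 1 := by
  rcases eq_or_ne n 0 with rfl | hn
  · simp
  have := sub_one_mul_padicValNat_factorial_lt_of_ne_zero p hn
  rw [mul_comm]
  omega

/-- The radius of convergence of the `p`-adic exponential. -/
def padicExpRadius (p : ℕ) : ℝ := (p : ℝ) ^ (-(1 : ℝ) / ((p : ℝ) - 1))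

section Padic

variable {p : ℕ} [Fact p.Prime]

theorem padicExpRadius_pos : 0 < padicExpRadius p :=
  Real.rpow_pos_of_pos (by exact_mod_cast (Fact.out : p.Prime).pos) _

theorem padicExpRadius_pow_le_norm_natCast {m k : ℕ} (hm : m ≠ 0)
    (h : padicValNat p m * (p - 1) ≤ k) : padicExpRadius p ^ k ≤ ‖(m : ℚ_[p])‖ := by
  have hp : (1 : ℝ) < p := by exact_mod_cast (Fact.out : p.Prime).one_lt
  have hv : (padicValNat p m : ℝ) * ((p : ℝ) - 1) ≤ k := by
    have hcast : (((p - 1 : ℕ) : ℝ)) = (p : ℝ) - 1 := by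
      rw [Nat.cast_sub (Fact.out : p.Prime).one_le, Nat.cast_one]
    rw [← hcast]
    exact_mod_cast h
  rw [Padic.norm_eq_zpow_neg_valuation (by exact_mod_cast hm), Padic.valuation_natCast,
    padicExpRadius, ← Real.rpow_natCast, ← Real.rpow_mul (by positivity), ← Real.rpow_intCast,
    Real.rpow_le_rpow_left_iff hp, Int.cast_neg, Int.cast_natCast, neg_div, neg_mul,
    neg_le_neg_iff, one_div_mul_eq_div, le_div_iff₀ (by linarith)]
  exact hv

end Padic

section Series

variable {K : Type*} [NormedField K] [CompleteSpace K]

theorem pexp_eq_tsum (x : K) : pexp x = ∑' n : ℕ, ((n ! : ℕ) : K)⁻¹ * x ^ n := by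
  simp only [pexp, div_eq_inv_mul]

theorem plog_eq_tsum (q : K) : plog q = ∑' n : ℕ, (-1) ^ (n + 1) / (n : K) * (q - 1) ^ n := by
  simp only [plog, div_mul_eq_mul_div]

theorem qbracket_zero (q : K) : qbracket q 0 = 0 := by
  simp [qbracket, qpow, pexp_eq_tsum, tsum_mul_zero_pow]

end Series

section Bracket

variable {p : ℕ} [Fact p.Prime] {K : Type*} [NormedField K] [Algebra ℚ_[p] K]

theorem inv_norm_natCast_mul_padicExpRadius_pow_le
    (hisom : ∀ a : ℚ_[p], ‖algebraMap ℚ_[p] K a‖ = ‖a‖) {m k : ℕ} (hm : m ≠ 0)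
    (h : padicValNat p m * (p - 1) ≤ k) : ‖(m : K)‖⁻¹ * padicExpRadius p ^ k ≤ 1 := by
  have hnorm : ‖(m : K)‖ = ‖(m : ℚ_[p])‖ := by rw [← map_natCast (algebraMap ℚ_[p] K), hisom]
  rw [hnorm, inv_mul_le_one₀ (norm_pos_iff.2 (by exact_mod_cast hm))]
  exact padicExpRadius_pow_le_norm_natCast hm h

variable [CompleteSpace K] [IsUltrametricDist K]
  (hisom : ∀ a : ℚ_[p], ‖algebraMap ℚ_[p] K a‖ = ‖a‖)
include hisom

theorem norm_pexp_sub_pexp_sub_le {s : ℝ} (hs : s < padicExpRadius p) {z z' : K}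
    (hz : ‖z‖ ≤ s) (hz' : ‖z'‖ ≤ s) :
    ‖pexp z - pexp z' - (z - z')‖ ≤ s / padicExpRadius p * ‖z - z'‖ := by
  have hcoeff : ∀ n : ℕ,
      ‖(((n + 1)! : ℕ) : K)⁻¹‖ * padicExpRadius p ^ n ≤ 1 := fun n => by
    rw [norm_inv]
    exact inv_norm_natCast_mul_padicExpRadius_pow_le hisom (Nat.factorial_ne_zero _)
      (by simpa using padicValNat_factorial_mul_sub_one_le p (n + 1))
  simpa [pexp_eq_tsum] using
    norm_tsum_mul_pow_sub_tsum_mul_pow_sub_le (a := fun n => ((n ! : ℕ) : K)⁻¹) hcoeff hs hz hz'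

theorem norm_plog_sub_le {q : K} (hq : ‖q - 1‖ < padicExpRadius p) :
    ‖plog q - (q - 1)‖ ≤ ‖q - 1‖ / padicExpRadius p * ‖q - 1‖ := by
  have hcoeff : ∀ n : ℕ,
      ‖(-1 : K) ^ (n + 1 + 1) / ((n + 1 : ℕ) : K)‖ * padicExpRadius p ^ n ≤ 1 := fun n => by
    simp only [norm_div, norm_pow, norm_neg, norm_one, one_pow, one_div]
    exact inv_norm_natCast_mul_padicExpRadius_pow_le hisom n.succ_ne_zero
      (by simpa using padicValNat_mul_sub_one_le p (n + 1))
  simpa [plog_eq_tsum, tsum_mul_zero_pow] using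
    norm_tsum_mul_pow_sub_tsum_mul_pow_sub_le (a := fun n => (-1 : K) ^ (n + 1) / n) hcoeff hq
      le_rfl (norm_zero.trans_le (norm_nonneg _))

theorem norm_plog {q : K} (hq : ‖q - 1‖ < padicExpRadius p) : ‖plog q‖ = ‖q - 1‖ :=
  norm_eq_of_norm_sub_le_mul ((div_lt_one padicExpRadius_pos).2 hq) (norm_plog_sub_le hisom hq)

theorem norm_qbracket_sub_qbracket_sub_le {q : K} (hq : ‖q - 1‖ < padicExpRadius p) {x x' : K}
    (hx : ‖x‖ ≤ 1) (hx' : ‖x'‖ ≤ 1) :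
    ‖qbracket q x - qbracket q x' - (x - x')‖ ≤ ‖q - 1‖ / padicExpRadius p * ‖x - x'‖ := by
  rcases eq_or_ne q 1 with rfl | hq1
  · simp [qbracket]
  set t := ‖q - 1‖ / padicExpRadius p
  have hy : 0 < ‖q - 1‖ := norm_pos_iff.2 (sub_ne_zero.2 hq1)
  have hL := norm_plog hisom hq
  have hmul {u : K} (hu : ‖u‖ ≤ 1) : ‖u * plog q‖ ≤ ‖q - 1‖ := by
    rw [norm_mul, hL]; exact mul_le_of_le_one_left (norm_nonneg _) hu
  have hexp := norm_pexp_sub_pexp_sub_le hisom hq (hmul hx) (hmul hx')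
  have hlog := norm_plog_sub_le hisom hq
  have hdecomp : qbracket q x - qbracket q x' - (x - x') =
      ((pexp (x * plog q) - pexp (x' * plog q) - (x * plog q - x' * plog q)) +
        (x - x') * (plog q - (q - 1))) / (q - 1) := by
    simp only [qbracket, if_neg hq1, qpow]
    field_simp
    ring
  rw [hdecomp, norm_div, div_le_iff₀ hy]
  refine (norm_add_le_max _ _).trans (max_le ?_ ?_)
  · calc _ ≤ t * ‖x * plog q - x' * plog q‖ := hexp
      _ = t * ‖x - x'‖ * ‖q - 1‖ := by rw [← sub_mul, norm_mul, hL, mul_assoc]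
  · calc ‖(x - x') * (plog q - (q - 1))‖ ≤ ‖x - x'‖ * (t * ‖q - 1‖) := by
          rw [norm_mul]; exact mul_le_mul_of_nonneg_left hlog (norm_nonneg _)
      _ = t * ‖x - x'‖ * ‖q - 1‖ := by ring

end Bracket

theorem stmt0_general (p : ℕ) [Fact p.Prime] (K : Type*) [NormedField K] [CompleteSpace K]
    [IsUltrametricDist K] [Algebra ℚ_[p] K]
    (hisom : ∀ a : ℚ_[p], ‖algebraMap ℚ_[p] K a‖ = ‖a‖)
    (q : K) (hq : ‖q - 1‖ < (p : ℝ) ^ (-(1 : ℝ) / ((p : ℝ) - 1))) :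
    Set.BijOn (qbracket q) {x : K | ‖x‖ ≤ 1} {x : K | ‖x‖ ≤ 1} ∧
    (∀ x x' : K, ‖x‖ ≤ 1 → ‖x'‖ ≤ 1 →
      ‖qbracket q x - qbracket q x'‖ = ‖x - x'‖) ∧
    (∀ x : K, ‖x‖ ≤ 1 → ‖qbracket q x‖ = ‖x‖) := by
  have ht0 : 0 ≤ ‖q - 1‖ / padicExpRadius p := div_nonneg (norm_nonneg _) padicExpRadius_pos.le
  have ht1 : ‖q - 1‖ / padicExpRadius p < 1 := (div_lt_one padicExpRadius_pos).2 hq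
  have hclose (x x' : K) (hx : ‖x‖ ≤ 1) (hx' : ‖x'‖ ≤ 1) :=
    norm_qbracket_sub_qbracket_sub_le hisom hq hx hx'
  have hiso (x x' : K) (hx : ‖x‖ ≤ 1) (hx' : ‖x'‖ ≤ 1) :
      ‖qbracket q x - qbracket q x'‖ = ‖x - x'‖ :=
    norm_eq_of_norm_sub_le_mul ht1 (hclose x x' hx hx')
  have hnorm (x : K) (hx : ‖x‖ ≤ 1) : ‖qbracket q x‖ = ‖x‖ := by
    simpa [qbracket_zero] using hiso x 0 hx (by simp)
  refine ⟨⟨fun x hx => (hnorm x hx).trans_le hx, fun x hx x' hx' h => ?_,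
    surjOn_of_norm_sub_sub_le ht0 ht1 (qbracket_zero q) hclose⟩, hiso, hnorm⟩
  simpa [h, sub_eq_zero, eq_comm] using hiso x x' hx hx'

theorem stmt0 (p : ℕ) [Fact p.Prime] (K : Type*) [NormedField K] [CompleteSpace K]
    [IsAlgClosed K] [IsUltrametricDist K] [Algebra ℚ_[p] K]
    (hisom : ∀ a : ℚ_[p], ‖algebraMap ℚ_[p] K a‖ = ‖a‖)
    (q : K) (hq : ‖q - 1‖ < (p : ℝ) ^ (-(1 : ℝ) / ((p : ℝ) - 1))) :
    Set.BijOn (qbracket q) {x : K | ‖x‖ ≤ 1} {x : K | ‖x‖ ≤ 1} ∧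
    (∀ x x' : K, ‖x‖ ≤ 1 → ‖x'‖ ≤ 1 →
      ‖qbracket q x - qbracket q x'‖ = ‖x - x'‖) ∧
    (∀ x : K, ‖x‖ ≤ 1 → ‖qbracket q x‖ = ‖x‖) :=
  stmt0_general p K hisom q hq
end
end

section
/- Let p be a prime. There exist x, q ∈ ℤ_p with x ∉ {0, 1}, q ≠ 1, ‖q − 1‖_p < p^{-1/(p-1)} (i.e., q ≡ 1 mod p if p is odd, and q ≡ 1 mod 4 if p = 2), and [x]_q = x, if and only if p = 3. -/
/-!
`K` plays the role of `ℂ_[p]`, the `p`-adic complex numbers: a complete, algebraically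
closed, nonarchimedean normed field extending `ℚ_[p]` isometrically (so `‖(p : K)‖ = 1/p`).
-/

noncomputable section

/-!
On the disc `‖t‖ ≤ p ^ (-w)` with `(p - 1) * w > 1`, the series `exp` converges, `log` is an
isometry (`log u - log v = (u - v) + smaller terms`), and `log (exp t) = t`; the latter because
`log u` is within `‖N‖` of `(u ^ N - 1) / N`, by the congruence
`m! * choose (N - 1) m ≡ (-1) ^ m * m!  [ZMOD N]`, while `(exp t ^ N - 1) / N = (exp (N t) - 1) / N`
is within `‖N‖` of `t`; letting `N = p ^ n` grow gives the claim. Hence `exp ∘ log = id`, and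
with `t = log q` the equation `[x]_q = x` reads `exp (x t) - 1 = x (exp t - 1)`, that is
`∑_{n ≥ 2} (x ^ n - x) t ^ n / n! = 0`. The term `n = 2` has norm `‖x (x - 1)‖ ‖t ^ 2 / 2‖`, and for
`p ≠ 3` every later term is smaller by a factor `p`, so `x ∈ {0, 1}`. For `p = 3` the term `n = 3`
is as large as the term `n = 2`, and indeed `[3]_{-2} = 1 - 2 + 4 = 3`.
-/

open Finset IsUltrametricDist
open scoped Nat

theorem norm_eq_of_norm_sub_le_mul_s17 {S : Type*} [SeminormedAddCommGroup S] [IsUltrametricDist S]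
    {x y : S} {c : ℝ} (hc : c < 1) (h : ‖x - y‖ ≤ c * ‖y‖) :
    ‖x‖ = ‖y‖ := by
  rcases (norm_nonneg y).eq_or_lt with hy | hy
  · have hxy : ‖x - y‖ ≤ 0 := by simpa [← hy] using h
    rw [← hy, ← sub_add_cancel x y]
    exact le_antisymm ((norm_add_le_max _ _).trans (max_le hxy hy.symm.le)) (norm_nonneg _)
  · have hlt : ‖x - y‖ < ‖y‖ := h.trans_lt (by nlinarith)
    rw [← sub_add_cancel x y, norm_add_eq_max_of_norm_ne_norm hlt.ne, max_eq_right hlt.le]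

theorem norm_pow_sub_pow_le {K : Type*} [NormedField K] [IsUltrametricDist K] {a b : K} {r : ℝ}
    (ha : ‖a‖ ≤ r) (hb : ‖b‖ ≤ r) (k : ℕ) : ‖a ^ k - b ^ k‖ ≤ ‖a - b‖ * r ^ (k - 1) := by
  have hr : 0 ≤ r := (norm_nonneg a).trans ha
  rw [← geom_sum₂_mul, norm_mul, mul_comm]
  refine mul_le_mul_of_nonneg_left (norm_sum_le_of_forall_le_of_nonneg (by positivity) ?_)
    (norm_nonneg _)
  intro i hi
  have hi : i < k := Finset.mem_range.mp hi
  calc ‖a ^ i * b ^ (k - 1 - i)‖ ≤ r ^ i * r ^ (k - 1 - i) := by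
        rw [norm_mul, norm_pow, norm_pow]
        gcongr
    _ = r ^ (k - 1) := by rw [← pow_add]; congr 1; omega

theorem pow_mul_zpow_le_zpow {b s : ℝ} (hb : 1 ≤ b) (hs0 : 0 ≤ s) {w : ℤ} (hs : s ≤ b ^ (-w))
    {k : ℕ} {v e : ℤ} (h : v ≤ w * k + e) : s ^ k * b ^ v ≤ b ^ e := by
  have hb0 : 0 < b := one_pos.trans_le hb
  calc s ^ k * b ^ v ≤ (b ^ (-w)) ^ k * b ^ v := by gcongr
    _ = b ^ (-(w * k) + v) := by
        rw [← zpow_natCast, ← zpow_mul, zpow_add₀ hb0.ne']; ring_nf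
    _ ≤ b ^ e := zpow_le_zpow_right₀ hb (by linarith)

section Exp

variable {K : Type*} [NormedField K] [CompleteSpace K]

theorem pexp_zero : pexp (0 : K) = 1 := by
  rw [pexp, tsum_eq_single 0 fun n hn => by simp [zero_pow hn]]
  simp

theorem pexp_add [CharZero K] {a b : K} (ha : Summable fun n : ℕ => ‖a ^ n / (n ! : K)‖)
    (hb : Summable fun n : ℕ => ‖b ^ n / (n ! : K)‖) : pexp (a + b) = pexp a * pexp b := by
  rw [pexp, pexp, pexp, tsum_mul_tsum_eq_tsum_sum_antidiagonal_of_summable_norm ha hb]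
  congr 1
  funext n
  rw [Finset.Nat.sum_antidiagonal_eq_sum_range_succ_mk, add_pow, Finset.sum_div]
  refine Finset.sum_congr rfl fun k hk => ?_
  rw [Nat.cast_choose K (Nat.lt_succ_iff.mp (Finset.mem_range.mp hk))]
  have := (Nat.cast_ne_zero (R := K)).mpr n.factorial_ne_zero
  field_simp

theorem pexp_natCast_mul [CharZero K] [IsUltrametricDist K] {a : K}
    (ha : Summable fun n : ℕ => ‖a ^ n / (n ! : K)‖) (m : ℕ) : pexp (m * a) = pexp a ^ m := by
  induction m with
  | zero => simp [pexp_zero]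
  | succ m ih =>
    have hma : Summable fun n : ℕ => ‖(m * a) ^ n / (n ! : K)‖ := by
      refine ha.of_nonneg_of_le (fun _ => norm_nonneg _) fun n => ?_
      rw [mul_pow, mul_div_assoc, norm_mul, norm_pow]
      exact mul_le_of_le_one_left (norm_nonneg _)
        (pow_le_one₀ (norm_nonneg _) (norm_natCast_le_one K m))
    rw [Nat.cast_succ, add_one_mul, pexp_add hma ha, ih, pow_succ]

theorem pexp_sub_one_sub {a : K} (ha : Summable fun n : ℕ => a ^ n / (n ! : K)) :
    pexp a - 1 - a = ∑' n : ℕ, a ^ (n + 2) / ((n + 2)! : K) := by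
  rw [pexp, ← ha.sum_add_tsum_nat_add 2]
  simp only [sum_range_succ, sum_range_zero, Nat.factorial_zero, Nat.factorial_one, Nat.cast_one,
    pow_zero, pow_one, div_one]
  ring

theorem plog_one : plog (1 : K) = 0 := by
  rw [plog, ← tsum_zero]
  refine tsum_congr fun n => ?_
  rcases eq_or_ne n 0 with rfl | hn <;> simp [*]

end Exp

theorem descFactorial_pred_cast_zmod {N : ℕ} (hN : N ≠ 0) (m : ℕ) :
    ((N - 1).descFactorial m : ZMod N) = (-1) ^ m * m ! := by
  induction m with
  | zero => simp
  | succ m ih =>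
    rw [Nat.descFactorial_succ, Nat.cast_mul, ih, Nat.factorial_succ, Nat.cast_mul]
    by_cases hm : m < N
    · rw [Nat.cast_sub (by omega : m ≤ N - 1), Nat.cast_sub (by omega : 1 ≤ N), ZMod.natCast_self]
      push_cast
      ring
    · have : (m ! : ZMod N) = 0 :=
        (ZMod.natCast_eq_zero_iff _ _).mpr (Nat.dvd_factorial (Nat.pos_of_ne_zero hN) (by omega))
      simp [this]

theorem pow_sub_one_div_eq_sum {K : Type*} [Field K] [CharZero K] {N : ℕ} (hN : N ≠ 0) (u : K) :
    (u ^ N - 1) / N = ∑ m ∈ range N, ((N - 1).choose m : K) * (u - 1) ^ (m + 1) / (m + 1) := by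
  obtain ⟨M, rfl⟩ := Nat.exists_eq_add_one_of_ne_zero hN
  have hu : u ^ (M + 1) - 1 =
      ∑ m ∈ range (M + 1), (u - 1) ^ (m + 1) * ((M + 1).choose (m + 1)) := by
    conv_lhs => rw [← sub_add_cancel u 1, add_pow, Finset.sum_range_succ']
    simp
  rw [hu, Finset.sum_div, Nat.add_sub_cancel]
  refine Finset.sum_congr rfl fun m _ => ?_
  have h := Nat.add_one_mul_choose_eq M m
  have hm : (m : K) + 1 ≠ 0 := by exact_mod_cast Nat.succ_ne_zero m
  field_simp
  have hK : ((M + 1 : ℕ) : K) * (M.choose m : ℕ) = ((M + 1).choose (m + 1) : ℕ) * ((m : K) + 1) :=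
    by exact_mod_cast h
  linear_combination (u - 1) ^ (m + 1) * hK.symm

section Padic

variable {p : ℕ} [hp : Fact p.Prime]

theorem one_lt_prime_cast : (1 : ℝ) < p := by exact_mod_cast hp.out.one_lt

theorem inv_prime_cast_lt_one : (p : ℝ)⁻¹ < 1 := inv_lt_one_of_one_lt₀ one_lt_prime_cast

theorem Padic.norm_natCast_eq_zpow {n : ℕ} (hn : n ≠ 0) :
    ‖(n : ℚ_[p])‖ = (p : ℝ) ^ (-(padicValNat p n : ℤ)) := by
  have := Padic.eq_padicNorm (p := p) n
  rw [padicNorm.eq_zpow_of_nonzero (by exact_mod_cast hn)] at this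
  simpa using this

theorem Padic.norm_div_natCast (x : ℚ_[p]) {n : ℕ} (hn : n ≠ 0) :
    ‖x / n‖ = ‖x‖ * (p : ℝ) ^ (padicValNat p n : ℤ) := by
  rw [norm_div, Padic.norm_natCast_eq_zpow hn, zpow_neg, div_inv_eq_mul]

theorem sub_one_mul_padicValNat_factorial_le (n : ℕ) : (p - 1) * padicValNat p n ! ≤ n - 1 := by
  rcases eq_or_ne n 0 with rfl | hn
  · simp
  · have := sub_one_mul_padicValNat_factorial_lt_of_ne_zero p hn
    omega

theorem padicValNat_factorial_add_one_le {w k : ℕ} (hw : 1 < (p - 1) * w) (hk : 2 ≤ k) :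
    padicValNat p k ! + 1 ≤ w * (k - 1) := by
  have hV := sub_one_mul_padicValNat_factorial_le (p := p) k
  by_contra! h
  have h1 : (p - 1) * w * (k - 1) ≤ (p - 1) * padicValNat p k ! := by
    rw [mul_assoc]; exact Nat.mul_le_mul_left _ (by omega)
  have h2 : 2 * (k - 1) ≤ (p - 1) * w * (k - 1) := Nat.mul_le_mul_right _ hw
  omega

theorem padicValNat_factorial_add_one_le_of_ne_three (hp3 : p ≠ 3) {w k : ℕ}
    (hw : 1 < (p - 1) * w) (hk : 3 ≤ k) :
    padicValNat p k ! + 1 ≤ w * (k - 2) + padicValNat p 2 := by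
  have hV := sub_one_mul_padicValNat_factorial_le (p := p) k
  rcases hp.out.eq_two_or_odd with rfl | hodd
  · have hw2 : 2 ≤ w := by omega
    have : 2 * (k - 2) ≤ w * (k - 2) := Nat.mul_le_mul_right _ hw2
    simp only [padicValNat_self] at *
    omega
  · have hp5 : 5 ≤ p := by
      have := hp.out.two_le
      have : p ≠ 4 := by rintro rfl; norm_num at hodd
      omega
    rw [padicValNat.eq_zero_of_not_dvd (n := 2) fun h => by have := Nat.le_of_dvd two_pos h; omega]
    have : 4 * padicValNat p k ! ≤ (p - 1) * padicValNat p k ! :=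
      Nat.mul_le_mul_right _ (by omega)
    have hw1 : 1 ≤ w := Nat.one_le_iff_ne_zero.mpr (by rintro rfl; simp at hw)
    have : 1 * (k - 2) ≤ w * (k - 2) := Nat.mul_le_mul_right _ hw1
    omega

theorem norm_pow_div_factorial_le {a : ℚ_[p]} (ha : ‖a‖ ≤ (p : ℝ)⁻¹) {n : ℕ} (hn : n ≠ 0) :
    ‖a ^ n / (n ! : ℚ_[p])‖ ≤ ‖a‖ := by
  obtain ⟨m, rfl⟩ := Nat.exists_eq_add_one_of_ne_zero hn
  have hV := sub_one_mul_padicValNat_factorial_le (p := p) (m + 1)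
  have hp1 : 1 ≤ p - 1 := by have := hp.out.two_le; omega
  have hV' := Nat.le_mul_of_pos_left (padicValNat p (m + 1)!) hp1
  have key : ‖a‖ ^ m * (p : ℝ) ^ (padicValNat p (m + 1)! : ℤ) ≤ (p : ℝ) ^ (0 : ℤ) :=
    pow_mul_zpow_le_zpow one_lt_prime_cast.le (norm_nonneg a) (w := 1) (by simpa using ha)
      (by omega)
  rw [Padic.norm_div_natCast _ (Nat.factorial_ne_zero _), norm_pow, pow_succ]
  calc ‖a‖ ^ m * ‖a‖ * (p : ℝ) ^ (padicValNat p (m + 1)! : ℤ)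
      = ‖a‖ * (‖a‖ ^ m * (p : ℝ) ^ (padicValNat p (m + 1)! : ℤ)) := by ring
    _ ≤ ‖a‖ := mul_le_of_le_one_right (norm_nonneg a) (by simpa using key)

theorem summable_norm_pow_div_factorial {w : ℕ} (hw : 1 < (p - 1) * w) {a : ℚ_[p]}
    (ha : ‖a‖ ≤ (p : ℝ) ^ (-(w : ℤ))) : Summable fun n : ℕ => ‖a ^ n / (n ! : ℚ_[p])‖ := by
  have hP : p - 1 ≠ 0 := by have := hp.out.two_le; omega
  -- `ρ = p ^ (1 / (p - 1))` bounds `‖1 / n!‖ ≤ ρ ^ n`, and `‖a‖ * ρ < 1` on the disc.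
  set ρ : ℝ := (p : ℝ) ^ (((p - 1 : ℕ) : ℝ)⁻¹)
  have hρ : ρ ^ (p - 1) = p := Real.rpow_inv_natCast_pow (by positivity) hP
  have hρ1 : 1 ≤ ρ := Real.one_le_rpow one_lt_prime_cast.le (by positivity)
  have hratio : ‖a‖ * ρ < 1 := by
    refine (pow_lt_one_iff_of_nonneg (by positivity) hP).mp ?_
    have key : ‖a‖ ^ (p - 1) * (p : ℝ) ^ (1 : ℤ) ≤ (p : ℝ) ^ (-1 : ℤ) :=
      pow_mul_zpow_le_zpow one_lt_prime_cast.le (norm_nonneg a) ha (by linarith)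
    rw [mul_pow, hρ]
    calc ‖a‖ ^ (p - 1) * p ≤ (p : ℝ) ^ (-1 : ℤ) := by simpa using key
      _ < 1 := by rw [zpow_neg_one]; exact inv_prime_cast_lt_one
  refine Summable.of_nonneg_of_le (fun _ => norm_nonneg _) (fun n => ?_)
    (summable_geometric_of_lt_one (by positivity) hratio)
  rw [Padic.norm_div_natCast _ (Nat.factorial_ne_zero n), norm_pow, mul_pow, zpow_natCast,
    ← hρ, ← pow_mul]
  have := sub_one_mul_padicValNat_factorial_le (p := p) n
  gcongr
  omega

theorem zpow_neg_le_inv {w : ℕ} (hw : 1 < (p - 1) * w) : (p : ℝ) ^ (-(w : ℤ)) ≤ (p : ℝ)⁻¹ := by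
  have hw1 : 1 ≤ w := Nat.one_le_iff_ne_zero.mpr (by rintro rfl; simp at hw)
  rw [← zpow_neg_one]
  exact zpow_le_zpow_right₀ one_lt_prime_cast.le (by omega)

theorem norm_pexp_mul_sub_one_sub_le {w : ℕ} (hw : 1 < (p - 1) * w) {t : ℚ_[p]}
    (ht : ‖t‖ ≤ (p : ℝ) ^ (-(w : ℤ))) {c : ℚ_[p]} (hc : ‖c‖ ≤ 1) :
    ‖pexp (c * t) - 1 - c * t‖ ≤ ‖c‖ ^ 2 * ‖t‖ := by
  have hct : ‖c * t‖ ≤ (p : ℝ) ^ (-(w : ℤ)) := by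
    rw [norm_mul]; exact (mul_le_of_le_one_left (norm_nonneg t) hc).trans ht
  rw [pexp_sub_one_sub (summable_norm_pow_div_factorial hw hct).of_norm]
  refine norm_tsum_le_of_forall_le_of_nonneg (by positivity) fun n => ?_
  rw [mul_pow, mul_div_assoc, norm_mul, norm_pow]
  exact mul_le_mul (pow_le_pow_of_le_one (norm_nonneg c) hc (by omega))
    (norm_pow_div_factorial_le (ht.trans (zpow_neg_le_inv hw)) (by omega))
    (norm_nonneg _) (by positivity)

theorem norm_pexp_sub_one_le {w : ℕ} (hw : 1 < (p - 1) * w) {t : ℚ_[p]}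
    (ht : ‖t‖ ≤ (p : ℝ) ^ (-(w : ℤ))) : ‖pexp t - 1‖ ≤ ‖t‖ := by
  have := norm_pexp_mul_sub_one_sub_le hw ht (c := 1) (by simp)
  simp only [one_mul, norm_one, one_pow] at this
  simpa using norm_add_le_max (pexp t - 1 - t) t |>.trans (max_le this le_rfl)

theorem summable_plog {u : ℚ_[p]} (hu : ‖u - 1‖ < 1) :
    Summable fun n : ℕ => (-1 : ℚ_[p]) ^ (n + 1) * (u - 1) ^ n / n := by
  have hgeom : Summable fun n : ℕ => (n : ℝ) * ‖u - 1‖ ^ n := by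
    simpa using summable_pow_mul_geometric_of_norm_lt_one (R := ℝ) 1 (by rwa [norm_norm])
  refine Summable.of_norm <| hgeom.of_nonneg_of_le (fun _ => norm_nonneg _) (fun n => ?_)
  rcases eq_or_ne n 0 with rfl | hn
  · simp
  rw [mul_div_assoc, norm_mul, norm_pow, norm_neg, norm_one, one_pow, one_mul,
    Padic.norm_div_natCast _ hn, norm_pow, mul_comm, zpow_natCast]
  gcongr
  exact_mod_cast Nat.le_of_dvd (Nat.pos_of_ne_zero hn) pow_padicValNat_dvd

theorem norm_plog_sub_plog {w : ℕ} (hw : 1 < (p - 1) * w) {u v : ℚ_[p]}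
    (hu : ‖u - 1‖ ≤ (p : ℝ) ^ (-(w : ℤ))) (hv : ‖v - 1‖ ≤ (p : ℝ) ^ (-(w : ℤ))) :
    ‖plog u - plog v‖ = ‖u - v‖ := by
  set θ : ℝ := (p : ℝ) ^ (-(w : ℤ))
  set f : ℕ → ℚ_[p] := fun n =>
    (-1) ^ (n + 1) * (u - 1) ^ n / n - (-1) ^ (n + 1) * (v - 1) ^ n / n with hf
  have hsu := summable_plog (hu.trans (zpow_neg_le_inv hw) |>.trans_lt inv_prime_cast_lt_one)
  have hsv := summable_plog (hv.trans (zpow_neg_le_inv hw) |>.trans_lt inv_prime_cast_lt_one)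
  have hsplit : plog u - plog v = (u - v) + ∑' n, f (n + 2) := by
    rw [plog, plog, ← hsu.tsum_sub hsv, ← (hsu.sub hsv).sum_add_tsum_nat_add 2]
    simp [hf, Finset.sum_range_succ]
  refine norm_eq_of_norm_sub_le_mul_s17 (inv_prime_cast_lt_one (p := p)) ?_
  rw [hsplit, add_sub_cancel_left]
  refine norm_tsum_le_of_forall_le_of_nonneg (by positivity) fun n => ?_
  have hvk : padicValNat p (n + 2) + 1 ≤ w * (n + 1) := by
    have h1 := padicValNat_factorial_add_one_le hw (show 2 ≤ n + 2 by omega)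
    have h2 : padicValNat p (n + 2) ≤ padicValNat p (n + 2)! :=
      (padicValNat_dvd_iff_le (Nat.factorial_ne_zero _)).mp
        (pow_padicValNat_dvd.trans (Nat.dvd_factorial (by omega) le_rfl))
    rw [show n + 2 - 1 = n + 1 by omega] at h1
    omega
  have key : θ ^ (n + 1) * (p : ℝ) ^ (padicValNat p (n + 2) : ℤ) ≤ (p : ℝ) ^ (-1 : ℤ) :=
    pow_mul_zpow_le_zpow one_lt_prime_cast.le (by positivity) le_rfl
      (by zify at hvk; push_cast; linarith)
  calc ‖f (n + 2)‖
      = ‖(u - 1) ^ (n + 2) - (v - 1) ^ (n + 2)‖ * (p : ℝ) ^ (padicValNat p (n + 2) : ℤ) := by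
        simp only [hf]
        rw [← sub_div, ← mul_sub, mul_div_assoc, norm_mul, norm_pow, norm_neg, norm_one,
          one_pow, one_mul, Padic.norm_div_natCast _ (by omega)]
    _ ≤ ‖u - v‖ * θ ^ (n + 1) * (p : ℝ) ^ (padicValNat p (n + 2) : ℤ) := by
        gcongr
        simpa using norm_pow_sub_pow_le hu hv (n + 2)
    _ ≤ (p : ℝ)⁻¹ * ‖u - v‖ := by
        rw [mul_assoc, mul_comm]
        gcongr
        simpa using key

theorem norm_factorial_mul_choose_sub_le {N : ℕ} (hN : N ≠ 0) (m : ℕ) :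
    ‖(m ! : ℚ_[p]) * ((N - 1).choose m - (-1) ^ m)‖ ≤ ‖(N : ℚ_[p])‖ := by
  obtain ⟨c, hc⟩ := (ZMod.intCast_zmod_eq_zero_iff_dvd
    ((N - 1).descFactorial m - (-1) ^ m * m ! : ℤ) N).mp (by
      push_cast; rw [descFactorial_pred_cast_zmod hN, sub_self])
  have hcast : (m ! : ℚ_[p]) * ((N - 1).choose m - (-1) ^ m) = N * c := by
    rw [Nat.descFactorial_eq_factorial_mul_choose] at hc
    exact_mod_cast (by push_cast at hc ⊢; linear_combination hc)
  rw [hcast, norm_mul]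
  exact mul_le_of_le_one_right (norm_nonneg _) (Padic.norm_int_le_one c)

theorem norm_pow_sub_one_div_sub_plog_le {u : ℚ_[p]} (hu : ‖u - 1‖ ≤ (p : ℝ)⁻¹) {N : ℕ}
    (hN : N ≠ 0) : ‖(u ^ N - 1) / N - plog u‖ ≤ ‖(N : ℚ_[p])‖ := by
  set z := u - 1
  have hlog := summable_plog (hu.trans_lt (inv_prime_cast_lt_one (p := p)))
  have hfin : ∀ m ∉ range N, ((N - 1).choose m : ℚ_[p]) * z ^ (m + 1) / (m + 1) = 0 := by
    intro m hm
    rw [Nat.choose_eq_zero_of_lt (by simp at hm; omega)]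
    simp
  have hdiff : (u ^ N - 1) / N - plog u =
      ∑' m : ℕ, (((N - 1).choose m : ℚ_[p]) - (-1) ^ m) * z ^ (m + 1) / (m + 1) := by
    rw [pow_sub_one_div_eq_sum hN, ← tsum_eq_sum (L := SummationFilter.unconditional ℕ) hfin,
      plog, hlog.tsum_eq_zero_add]
    simp only [Nat.cast_zero, div_zero, zero_add]
    rw [← (summable_of_ne_finset_zero hfin).tsum_sub ((summable_nat_add_iff 1).mpr hlog)]
    congr 1
    funext m
    push_cast
    ring
  rw [hdiff]
  refine norm_tsum_le_of_forall_le_of_nonneg (norm_nonneg _) fun m => ?_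
  have hsplit : (((N - 1).choose m : ℚ_[p]) - (-1) ^ m) * z ^ (m + 1) / (m + 1) =
      ((m ! : ℚ_[p]) * ((N - 1).choose m - (-1) ^ m)) * (z ^ (m + 1) / ((m + 1)! : ℚ_[p])) := by
    have : (m ! : ℚ_[p]) ≠ 0 := Nat.cast_ne_zero.mpr m.factorial_ne_zero
    have : (m : ℚ_[p]) + 1 ≠ 0 := by exact_mod_cast m.succ_ne_zero
    rw [Nat.factorial_succ]
    push_cast
    field_simp
  rw [hsplit, norm_mul]
  exact (mul_le_of_le_one_right (norm_nonneg _) ((norm_pow_div_factorial_le hu m.succ_ne_zero).trans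
    (hu.trans inv_prime_cast_lt_one.le))).trans (norm_factorial_mul_choose_sub_le hN m)

theorem Padic.eq_zero_of_forall_norm_le_norm_p_pow {x : ℚ_[p]}
    (h : ∀ n : ℕ, ‖x‖ ≤ ‖(p : ℚ_[p]) ^ n‖) : x = 0 := by
  have := (tendsto_pow_atTop_nhds_zero_of_norm_lt_one (Padic.norm_p_lt_one (p := p))).norm
  rw [norm_zero] at this
  exact norm_le_zero_iff.mp (ge_of_tendsto' this h)

theorem plog_pexp {w : ℕ} (hw : 1 < (p - 1) * w) {t : ℚ_[p]} (ht : ‖t‖ ≤ (p : ℝ) ^ (-(w : ℤ))) :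
    plog (pexp t) = t := by
  have hu : ‖pexp t - 1‖ ≤ (p : ℝ)⁻¹ :=
    (norm_pexp_sub_one_le hw ht).trans (ht.trans (zpow_neg_le_inv hw))
  refine sub_eq_zero.mp (Padic.eq_zero_of_forall_norm_le_norm_p_pow fun n => ?_)
  -- Both `plog (pexp t)` and `t` are within `‖p ^ n‖` of `(pexp t ^ p ^ n - 1) / p ^ n`.
  set N := p ^ n
  have hN : N ≠ 0 := pow_ne_zero n hp.out.ne_zero
  have hNp : ((p : ℚ_[p]) ^ n) = N := by push_cast [N]; rfl
  have hN0 : (N : ℚ_[p]) ≠ 0 := Nat.cast_ne_zero.mpr hN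
  have hNle : ‖(N : ℚ_[p])‖ ≤ 1 := norm_natCast_le_one _ N
  have happrox : ‖(pexp t ^ N - 1) / N - t‖ ≤ ‖(N : ℚ_[p])‖ := by
    rw [← pexp_natCast_mul (summable_norm_pow_div_factorial hw ht),
      show (pexp (N * t) - 1) / N - t = (pexp (N * t) - 1 - N * t) / N by field_simp,
      norm_div, div_le_iff₀ (norm_pos_iff.mpr hN0)]
    calc ‖pexp (N * t) - 1 - N * t‖ ≤ ‖(N : ℚ_[p])‖ ^ 2 * ‖t‖ :=
          norm_pexp_mul_sub_one_sub_le hw ht hNle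
      _ ≤ ‖(N : ℚ_[p])‖ ^ 2 * 1 := by
          gcongr; exact ht.trans ((zpow_neg_le_inv hw).trans inv_prime_cast_lt_one.le)
      _ = ‖(N : ℚ_[p])‖ * ‖(N : ℚ_[p])‖ := by ring
  rw [hNp, ← sub_add_sub_cancel _ ((pexp t ^ N - 1) / N)]
  refine (norm_add_le_max _ _).trans (max_le ?_ happrox)
  rw [norm_sub_rev]
  exact norm_pow_sub_one_div_sub_plog_le hu hN

theorem norm_plog_s17 {w : ℕ} (hw : 1 < (p - 1) * w) {u : ℚ_[p]}
    (hu : ‖u - 1‖ ≤ (p : ℝ) ^ (-(w : ℤ))) : ‖plog u‖ = ‖u - 1‖ := by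
  simpa [plog_one] using norm_plog_sub_plog hw hu (v := 1) (by simp)

theorem pexp_plog {w : ℕ} (hw : 1 < (p - 1) * w) {u : ℚ_[p]}
    (hu : ‖u - 1‖ ≤ (p : ℝ) ^ (-(w : ℤ))) : pexp (plog u) = u := by
  have ht := (norm_plog_s17 hw hu).trans_le hu
  have h := norm_plog_sub_plog hw ((norm_pexp_sub_one_le hw ht).trans ht) hu
  rw [plog_pexp hw ht, sub_self, norm_zero] at h
  exact sub_eq_zero.mp (norm_eq_zero.mp h.symm)

theorem norm_pow_div_factorial_le_of_ne_three (hp3 : p ≠ 3) {w : ℕ} (hw : 1 < (p - 1) * w)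
    {t : ℚ_[p]} (ht : ‖t‖ ≤ (p : ℝ) ^ (-(w : ℤ))) (n : ℕ) :
    ‖t ^ (n + 3) / ((n + 3)! : ℚ_[p])‖ ≤ (p : ℝ)⁻¹ * ‖t ^ 2 / 2‖ := by
  have hV := padicValNat_factorial_add_one_le_of_ne_three hp3 hw (show 3 ≤ n + 3 by omega)
  rw [show n + 3 - 2 = n + 1 by omega] at hV
  have key : ‖t‖ ^ (n + 1) * (p : ℝ) ^ (padicValNat p (n + 3)! : ℤ) ≤
      (p : ℝ) ^ ((padicValNat p 2 : ℤ) - 1) :=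
    pow_mul_zpow_le_zpow one_lt_prime_cast.le (norm_nonneg t) ht
      (by zify at hV; push_cast; linarith)
  rw [zpow_sub₀ (by exact_mod_cast hp.out.ne_zero), zpow_one] at key
  rw [show (2 : ℚ_[p]) = ((2 : ℕ) : ℚ_[p]) by norm_num, Padic.norm_div_natCast _ two_ne_zero,
    Padic.norm_div_natCast _ (Nat.factorial_ne_zero _), norm_pow, norm_pow]
  calc ‖t‖ ^ (n + 3) * (p : ℝ) ^ (padicValNat p (n + 3)! : ℤ)
      = ‖t‖ ^ 2 * (‖t‖ ^ (n + 1) * (p : ℝ) ^ (padicValNat p (n + 3)! : ℤ)) := by ring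
    _ ≤ ‖t‖ ^ 2 * ((p : ℝ) ^ (padicValNat p 2 : ℤ) / p) := by gcongr
    _ = (p : ℝ)⁻¹ * (‖t‖ ^ 2 * (p : ℝ) ^ (padicValNat p 2 : ℤ)) := by ring

theorem norm_pexp_mul_sub_one_sub_mul (hp3 : p ≠ 3) {w : ℕ} (hw : 1 < (p - 1) * w)
    {t : ℚ_[p]} (ht : ‖t‖ ≤ (p : ℝ) ^ (-(w : ℤ))) {x : ℚ_[p]} (hx : ‖x‖ ≤ 1) :
    ‖pexp (x * t) - 1 - x * (pexp t - 1)‖ = ‖x * (x - 1) * (t ^ 2 / 2)‖ := by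
  set f : ℕ → ℚ_[p] := fun n => (x ^ n - x) * (t ^ n / n !) with hf
  have hxt : ‖x * t‖ ≤ (p : ℝ) ^ (-(w : ℤ)) := by
    rw [norm_mul]; exact (mul_le_of_le_one_left (norm_nonneg t) hx).trans ht
  have hsxt := (summable_norm_pow_div_factorial hw hxt).of_norm
  have hst := (summable_norm_pow_div_factorial hw ht).of_norm
  have hsf : Summable f := by
    refine (hsxt.sub (hst.mul_left x)).congr fun n => ?_
    simp only [hf]; ring
  have hsplit : pexp (x * t) - 1 - x * (pexp t - 1) =
      x * (x - 1) * (t ^ 2 / 2) + ∑' n, f (n + 3) := by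
    have : pexp (x * t) - x * pexp t = ∑' n, f n := by
      rw [pexp, pexp, ← tsum_mul_left, ← hsxt.tsum_sub (hst.mul_left x)]
      congr 1; funext n; simp only [hf]; ring
    have h0 : f 0 = 1 - x := by simp [hf]
    have h1 : f 1 = 0 := by simp [hf]
    have h2 : f 2 = x * (x - 1) * (t ^ 2 / 2) := by
      simp only [hf, Nat.factorial_two, Nat.cast_ofNat]; ring
    rw [← hsf.sum_add_tsum_nat_add 3, sum_range_succ, sum_range_succ, sum_range_one, h0, h1, h2]
      at this
    linear_combination this
  refine norm_eq_of_norm_sub_le_mul_s17 (inv_prime_cast_lt_one (p := p)) ?_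
  rw [hsplit, add_sub_cancel_left]
  refine norm_tsum_le_of_forall_le_of_nonneg (by positivity) fun n => ?_
  have hxk : ‖x ^ (n + 3) - x‖ ≤ ‖x * (x - 1)‖ := by
    have := norm_pow_sub_pow_le hx (by simp) (b := 1) (n + 2)
    rw [one_pow, one_pow, mul_one] at this
    rw [show x ^ (n + 3) - x = x * (x ^ (n + 2) - 1) by ring, norm_mul, norm_mul]
    gcongr
  calc ‖f (n + 3)‖ ≤ ‖x * (x - 1)‖ * ((p : ℝ)⁻¹ * ‖t ^ 2 / 2‖) := by
        rw [hf, norm_mul]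
        exact mul_le_mul hxk (norm_pow_div_factorial_le_of_ne_three hp3 hw ht n)
          (norm_nonneg _) (norm_nonneg _)
    _ = (p : ℝ)⁻¹ * ‖x * (x - 1) * (t ^ 2 / 2)‖ := by rw [norm_mul (x * (x - 1))]; ring

theorem exists_norm_le_zpow_of_norm_lt {a : ℚ_[p]}
    (ha : ‖a‖ < (p : ℝ) ^ (-(1 : ℝ) / ((p : ℝ) - 1))) :
    ∃ w : ℕ, 1 < (p - 1) * w ∧ ‖a‖ ≤ (p : ℝ) ^ (-(w : ℤ)) := by
  have hp2 := hp.out.two_le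
  rcases eq_or_ne a 0 with rfl | ha0
  · exact ⟨2, by omega, by rw [norm_zero]; positivity⟩
  have hnorm := Padic.norm_eq_zpow_neg_valuation ha0
  rw [hnorm, ← Real.rpow_intCast, Real.rpow_lt_rpow_left_iff one_lt_prime_cast] at ha
  have hp1 : ((p - 1 : ℕ) : ℝ) = (p : ℝ) - 1 := by rw [Nat.cast_sub (by omega)]; simp
  have hpos : (0 : ℝ) < (p : ℝ) - 1 := by rw [← hp1]; exact_mod_cast (by omega : 0 < p - 1)
  have hk : (1 : ℝ) < ((p : ℝ) - 1) * a.valuation := by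
    rw [neg_div, Int.cast_neg, neg_lt_neg_iff, div_lt_iff₀ hpos] at ha
    linarith
  have hk0 : 0 ≤ a.valuation := by
    by_contra! h
    have : ((p : ℝ) - 1) * a.valuation ≤ 0 :=
      mul_nonpos_of_nonneg_of_nonpos hpos.le (by exact_mod_cast h.le)
    linarith
  refine ⟨a.valuation.toNat, ?_, by rw [hnorm, Int.toNat_of_nonneg hk0]⟩
  have hw : ((a.valuation.toNat : ℕ) : ℝ) = a.valuation := by
    exact_mod_cast Int.toNat_of_nonneg hk0
  have : (1 : ℝ) < ((p - 1) * a.valuation.toNat : ℕ) := by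
    push_cast [hp1, hw]
    exact hk
  exact_mod_cast this

theorem qpow_natCast {w : ℕ} (hw : 1 < (p - 1) * w) {q : ℚ_[p]}
    (hq : ‖q - 1‖ ≤ (p : ℝ) ^ (-(w : ℤ))) (n : ℕ) : qpow q n = q ^ n := by
  rw [qpow, pexp_natCast_mul (summable_norm_pow_div_factorial hw ((norm_plog_s17 hw hq).trans_le hq)),
    pexp_plog hw hq]

end Padic

theorem stmt17 (p : ℕ) [Fact p.Prime] :
    (∃ x q : ℚ_[p], ‖x‖ ≤ 1 ∧ ‖q‖ ≤ 1 ∧ x ≠ 0 ∧ x ≠ 1 ∧ q ≠ 1 ∧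
      ‖q - 1‖ < (p : ℝ) ^ (-(1 : ℝ) / ((p : ℝ) - 1)) ∧ qbracket q x = x) ↔ p = 3 := by
  constructor
  · rintro ⟨x, q, hx, -, hx0, hx1, hq1, hq, hqx⟩
    by_contra hp3
    obtain ⟨w, hw, hq⟩ := exists_norm_le_zpow_of_norm_lt hq
    rw [qbracket, if_neg hq1, qpow, div_eq_iff (sub_ne_zero.mpr hq1)] at hqx
    have h := norm_pexp_mul_sub_one_sub_mul hp3 hw ((norm_plog_s17 hw hq).trans_le hq) hx
    rw [pexp_plog hw hq, hqx, sub_self, norm_zero, eq_comm] at h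
    have ht : plog q ≠ 0 :=
      norm_ne_zero_iff.mp (by rw [norm_plog_s17 hw hq, norm_ne_zero_iff]; exact sub_ne_zero.mpr hq1)
    simp [hx0, sub_ne_zero.mpr hx1, ht] at h
  · rintro rfl
    have h3 : ‖(-2 : ℚ_[3]) - 1‖ = 3⁻¹ := by
      rw [show (-2 : ℚ_[3]) - 1 = -((3 : ℕ) : ℚ_[3]) by norm_num, norm_neg, Padic.norm_p]
      norm_num
    have hq : ‖(-2 : ℚ_[3]) - 1‖ ≤ ((3 : ℕ) : ℝ) ^ (-((1 : ℕ) : ℤ)) := by rw [h3]; norm_num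
    refine ⟨3, -2, ?_, ?_, by norm_num, by norm_num, by norm_num, ?_, ?_⟩
    · simpa using norm_natCast_le_one ℚ_[3] 3
    · simpa using norm_intCast_le_one ℚ_[3] (-2)
    · rw [h3, ← Real.rpow_neg_one]
      exact Real.rpow_lt_rpow_of_exponent_lt (by norm_num) (by norm_num)
    · rw [qbracket, if_neg (by norm_num), show (3 : ℚ_[3]) = ((3 : ℕ) : ℚ_[3]) by norm_num,
        qpow_natCast (by norm_num) hq]
      norm_num
end
end
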